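/- arXiv:2111.01832 — 6 statements merged into one kernel-verified Lean document; each statement's English description precedes it below -/
import Mathlib

section
/- Along any solution of the ODE ż = B(z), the Hamiltonian satisfies, for every t in the interval of definition, d/dt H(x_t, y_t) = -(α + β/x_t²) · y_t², which is ≤ 0; in particular t ↦ H(x_t, y_t) is nonincreasing. -/
open Real Set Filter

/-- The optimal-velocity function `V(x) = tanh(x-2) - tanh(-2)`. -/
noncomputable def V (x : ℝ) : ℝ := Real.tanh (x - 2) - Real.tanh (-2)

/-- Inverse hyperbolic tangent. -/
noncomputable def artanh (v : ℝ) : ℝ := (1 / 2) * Real.log ((1 + v) / (1 - v))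

/-- The equilibrium following distance `x_∞ = d (2 + artanh(v∘ + tanh(-2)))`. -/
noncomputable def xInf (d v₀ : ℝ) : ℝ := d * (2 + _root_.artanh (v₀ + Real.tanh (-2)))

/-- The potential `P(x) = α ∫_{x_∞}^x ( V(s/d) - v∘ ) ds`. -/
noncomputable def P (α d v₀ : ℝ) (x : ℝ) : ℝ :=
  α * ∫ s in (xInf d v₀)..x, (V (s / d) - v₀)

/-- The Hamiltonian `H(x,y) = y²/2 + P(x)`. -/
noncomputable def H (α d v₀ : ℝ) (x y : ℝ) : ℝ := y ^ 2 / 2 + P α d v₀ x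

/-- `IsSol α β d v₀ x y T` says that `t ↦ (x t, y t)` solves the ODE `ż = B(z)` on the
forward time interval `[0, T)`, staying in the state space `S = (0,∞) × ℝ`. -/
def IsSol (α β d v₀ : ℝ) (x y : ℝ → ℝ) (T : EReal) : Prop :=
  ∀ t : ℝ, 0 ≤ t → (t : EReal) < T →
    0 < x t ∧ HasDerivAt x (y t) t ∧
      HasDerivAt y (-α * (V (x t / d) - v₀ + y t) - β * y t / (x t) ^ 2) t

lemma Real.continuous_tanh : Continuous Real.tanh := by
  rw [funext Real.tanh_eq_sinh_div_cosh]
  exact continuous_sinh.div continuous_cosh fun x => (cosh_pos x).ne'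

lemma continuous_V : Continuous V :=
  (Real.continuous_tanh.comp (continuous_sub_right 2)).sub continuous_const

lemma hasDerivAt_P (α d v₀ p : ℝ) : HasDerivAt (P α d v₀) (α * (V (p / d) - v₀)) p :=
  have hcont : Continuous fun s => V (s / d) - v₀ :=
    (continuous_V.comp (continuous_id.div_const d)).sub continuous_const
  (hcont.integral_hasStrictDerivAt (xInf d v₀) p).hasDerivAt.const_mul α

/-- The energy identity: the `α (V - v∘)` forces cancel against `P'`, leaving only the
damping terms of `ẏ` multiplied by `y`. -/
lemma IsSol.hasDerivAt_H {α β d v₀ : ℝ} {x y : ℝ → ℝ} {T : EReal} (hsol : IsSol α β d v₀ x y T)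
    {t : ℝ} (ht : 0 ≤ t) (htT : (t : EReal) < T) :
    HasDerivAt (fun s => H α d v₀ (x s) (y s)) (-(α + β / (x t) ^ 2) * (y t) ^ 2) t := by
  obtain ⟨-, hx, hy⟩ := hsol t ht htT
  have hkin := (hy.pow 2).div_const 2
  have hpot := (hasDerivAt_P α d v₀ (x t)).comp t hx
  refine (hkin.add hpot).congr_deriv ?_
  ring

lemma dissipation_nonpos {α β : ℝ} (hα : 0 ≤ α) (hβ : 0 ≤ β) (x y : ℝ) :
    -(α + β / x ^ 2) * y ^ 2 ≤ 0 := by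
  have : 0 ≤ (α + β / x ^ 2) * y ^ 2 := by positivity
  linarith

lemma convex_nonneg_lt_coe_ereal (T : EReal) : Convex ℝ {t : ℝ | 0 ≤ t ∧ (t : EReal) < T} :=
  (ordConnected_Ici.inter (ordConnected_Iio.preimage_mono EReal.coe_strictMono.monotone)).convex

lemma antitoneOn_of_hasDerivAt_nonpos {D : Set ℝ} (hD : Convex ℝ D) {f f' : ℝ → ℝ}
    (hf : ∀ t ∈ D, HasDerivAt f (f' t) t) (hf' : ∀ t ∈ D, f' t ≤ 0) : AntitoneOn f D :=
  antitoneOn_of_hasDerivWithinAt_nonpos hD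
    (fun t ht => (hf t ht).continuousAt.continuousWithinAt)
    (fun t ht => (hf t (interior_subset ht)).hasDerivWithinAt)
    (fun t ht => hf' t (interior_subset ht))

theorem hamiltonian_decreasing_general (α β d v₀ : ℝ) (hα : 0 < α) (hβ : 0 < β)
    (x y : ℝ → ℝ) (T : EReal) (hsol : IsSol α β d v₀ x y T) :
    (∀ t : ℝ, 0 ≤ t → (t : EReal) < T →
        HasDerivAt (fun s => H α d v₀ (x s) (y s))
          (-(α + β / (x t) ^ 2) * (y t) ^ 2) t ∧
        -(α + β / (x t) ^ 2) * (y t) ^ 2 ≤ 0) ∧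
    AntitoneOn (fun t => H α d v₀ (x t) (y t)) {t : ℝ | 0 ≤ t ∧ (t : EReal) < T} := by
  have hdiss (t : ℝ) : -(α + β / (x t) ^ 2) * (y t) ^ 2 ≤ 0 :=
    dissipation_nonpos hα.le hβ.le (x t) (y t)
  refine ⟨fun t ht htT => ⟨hsol.hasDerivAt_H ht htT, hdiss t⟩, ?_⟩
  exact antitoneOn_of_hasDerivAt_nonpos (convex_nonneg_lt_coe_ereal T)
    (fun t ht => hsol.hasDerivAt_H ht.1 ht.2) (fun t _ => hdiss t)

/-- along any solution of `ż = B(z)`, the Hamiltonian satisfies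
`d/dt H(x_t,y_t) = -(α + β/x_t²) y_t² ≤ 0`; in particular `t ↦ H(x_t,y_t)` is
nonincreasing on the interval of definition. -/
theorem hamiltonian_decreasing (α β d v₀ : ℝ) (hα : 0 < α) (hβ : 0 < β) (hd : 0 < d)
    (hv₀ : v₀ ∈ Set.Ioo 0 (1 + Real.tanh 2))
    (x y : ℝ → ℝ) (T : EReal) (hsol : IsSol α β d v₀ x y T) :
    (∀ t : ℝ, 0 ≤ t → (t : EReal) < T →
        HasDerivAt (fun s => H α d v₀ (x s) (y s))
          (-(α + β / (x t) ^ 2) * (y t) ^ 2) t ∧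
        -(α + β / (x t) ^ 2) * (y t) ^ 2 ≤ 0) ∧
    AntitoneOn (fun t => H α d v₀ (x t) (y t)) {t : ℝ | 0 ≤ t ∧ (t : EReal) < T} :=
  hamiltonian_decreasing_general α β d v₀ hα hβ x y T hsol
end

section
/- Let t ↦ (x_t, y_t) be the unique solution of the ODE ż = B(z) on its maximal forward interval [0, 𝒯), with initial condition (x∘, y∘) ∈ S. If 𝒯 < ∞, then lim_{t → 𝒯⁻} x_t = 0; i.e., a finite maximal time of definition forces collision with the boundary {0} × ℝ. -/
/-! The speed is bounded: `V` takes values in `(-2, 2)`, so `y ẏ < 0` as soon as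
`|y| ≥ 2 + |v∘|`. Hence `x` is Lipschitz and has a limit `L ≥ 0` at `𝒯`. If `L > 0`, then `x`
stays away from `0` near `𝒯`, so `ẏ` is bounded there and `y` converges too; the solution then
approaches a point of the open half plane on which `B` is `C¹`. Picard–Lindelöf gives solutions
through all points near that limit on a common time interval, so starting from a time close to
`𝒯` the solution continues beyond `𝒯`, contradicting maximality. -/

open Real Set Filter Topology

/-- `[0, T)` is the maximal forward interval of definition. -/
def IsMaximal (α β d v₀ : ℝ) (x y : ℝ → ℝ) (T : EReal) : Prop :=
  ∀ (T' : EReal) (x' y' : ℝ → ℝ), T < T' → IsSol α β d v₀ x' y' T' →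
    x' 0 = x 0 → y' 0 = y 0 → False

open scoped NNReal

theorem exists_tendsto_nhdsLT_of_hasDerivAt_of_norm_le {E : Type*} [NormedAddCommGroup E]
    [NormedSpace ℝ E] [CompleteSpace E] {f f' : ℝ → E} {T C : ℝ}
    (h : ∀ᶠ t in 𝓝[<] T, HasDerivAt f (f' t) t ∧ ‖f' t‖ ≤ C) :
    ∃ L, Tendsto f (𝓝[<] T) (𝓝 L) := by
  obtain ⟨c, hcT, hc⟩ := (nhdsLT_basis T).eventually_iff.mp h
  have hlip : LipschitzOnWith C.toNNReal f (Ioo c T) :=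
    (convex_Ioo c T).lipschitzOnWith_of_nnnorm_hasDerivWithin_le
      (fun t ht ↦ (hc ht).1.hasDerivWithinAt)
      fun t ht ↦ by simpa [← NNReal.coe_le_coe] using (hc ht).2.trans (le_max_left C 0)
  rw [← nhdsWithin_Ioo_eq_nhdsLT hcT]
  have : (𝓝[Ioo c T] T).NeBot := by rw [nhdsWithin_Ioo_eq_nhdsLT hcT]; infer_instance
  have hcauchy : Cauchy (𝓝[Ioo c T] T) := cauchy_nhds.mono nhdsWithin_le_nhds
  exact cauchy_map_iff_exists_tendsto.mp (hcauchy.map_of_le hlip.uniformContinuousOn inf_le_right)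

theorem IsPicardLindelof.exists_eq_forall_mem_Icc_hasDerivWithinAt_and_mem_closedBall
    {E : Type*} [NormedAddCommGroup E] [NormedSpace ℝ E] [CompleteSpace E]
    {f : ℝ → E → E} {tmin tmax : ℝ} {t₀ : Icc tmin tmax} {x₀ x : E} {a r L K : ℝ≥0}
    (hf : IsPicardLindelof f t₀ x₀ a r L K) (hx : x ∈ Metric.closedBall x₀ r) :
    ∃ α : ℝ → E, α t₀ = x ∧ ∀ t ∈ Icc tmin tmax,
      HasDerivWithinAt α (f t (α t)) (Icc tmin tmax) t ∧ α t ∈ Metric.closedBall x₀ a := by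
  obtain ⟨α, hα⟩ := ODE.FunSpace.exists_isFixedPt_next hf hx
  refine ⟨α.compProj, by rw [ODE.FunSpace.compProj_val, ← hα, ODE.FunSpace.next_apply₀],
    fun t ht ↦ ⟨?_, α.compProj_mem_closedBall hf.mul_max_le⟩⟩
  apply ODE.hasDerivWithinAt_picard_Icc t₀.2 hf.continuousOn_uncurry
    α.continuous_compProj.continuousOn (fun _ _ ↦ α.compProj_mem_closedBall hf.mul_max_le)
    x ht |>.congr_of_mem _ ht
  intro t' ht'
  nth_rw 1 [← hα]
  rw [ODE.FunSpace.compProj_of_mem ht', ODE.FunSpace.next_apply]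

theorem ContDiffAt.exists_isPicardLindelof_of_mem_nhds
    {E : Type*} [NormedAddCommGroup E] [NormedSpace ℝ E] {f : E → E} {x₀ : E} {U : Set E}
    (hf : ContDiffAt ℝ 1 f x₀) (hU : U ∈ 𝓝 x₀) :
    ∃ (ε : ℝ) (hε : 0 < ε) (a r L K : ℝ≥0), 0 < r ∧ Metric.closedBall x₀ a ⊆ U ∧
      ∀ t₀ : ℝ, IsPicardLindelof (fun _ ↦ f) (tmin := t₀ - ε) (tmax := t₀ + ε)
        ⟨t₀, by simp [hε.le]⟩ x₀ a r L K := by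
  obtain ⟨ε, hε, a, r, L, K, hr, hpl⟩ := IsPicardLindelof.of_contDiffAt_one hf
  obtain ⟨ρ, hρ, hρU⟩ := Metric.nhds_basis_closedBall.mem_iff.mp hU
  set a' : ℝ≥0 := min a ⟨ρ, hρ.le⟩
  have ha' : 0 < a' := by
    have hra := (hpl 0).mul_max_le
    refine lt_min ?_ hρ
    simp only [sub_zero, zero_add, zero_sub, neg_neg, max_self] at hra
    have : (0 : ℝ) < a := by nlinarith [L.2, NNReal.coe_pos.mpr hr]
    exact_mod_cast this
  set ε' := min ε (a' / 2 / (L + 1))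
  refine ⟨ε', lt_min hε (by positivity), a', a' / 2, L, K, half_pos ha',
    (Metric.closedBall_subset_closedBall (min_le_right _ _)).trans hρU, fun t₀ ↦ ?_⟩
  refine (hpl t₀).shrink _ (by linarith [min_le_left ε (a' / 2 / (L + 1))])
    (by linarith [min_le_left ε (a' / 2 / (L + 1))]) (min_le_left _ _) ?_
  have hε' : ε' * (L + 1) ≤ a' / 2 :=
    (le_div_iff₀ (by positivity)).mp (min_le_right _ _)
  simp only [add_sub_cancel_left, sub_sub_cancel, max_self, NNReal.coe_div, NNReal.coe_ofNat]
  nlinarith [lt_min hε (by positivity : (0 : ℝ) < a' / 2 / (L + 1))]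

theorem HasDerivAt.ite_le {E : Type*} [NormedAddCommGroup E] [NormedSpace ℝ E]
    {f g : ℝ → E} {e : E} {s : ℝ} (hf : HasDerivAt f e s) (hg : HasDerivAt g e s)
    (hfg : f s = g s) : HasDerivAt (fun t ↦ if t ≤ s then f t else g t) e s := by
  have hle : HasDerivWithinAt (fun t ↦ if t ≤ s then f t else g t) e (Iic s) s :=
    hf.hasDerivWithinAt.congr (fun t ht ↦ if_pos ht) (if_pos le_rfl)
  have hge : HasDerivWithinAt (fun t ↦ if t ≤ s then f t else g t) e (Ici s) s := by
    refine hg.hasDerivWithinAt.congr (fun t (ht : s ≤ t) ↦ ?_) (by rw [if_pos le_rfl, hfg])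
    split_ifs with h
    · rw [le_antisymm h ht, hfg]
    · rfl
  rw [← hasDerivWithinAt_univ, ← Iic_union_Ici]
  exact hle.union hge

theorem ContDiffAt.exists_extension_of_tendsto_nhdsLT
    {E : Type*} [NormedAddCommGroup E] [NormedSpace ℝ E] [CompleteSpace E]
    {f : E → E} {p : E} {U : Set E} (hf : ContDiffAt ℝ 1 f p) (hU : U ∈ 𝓝 p)
    {z : ℝ → E} {t₀ T : ℝ} (hT : t₀ < T)
    (hz : ∀ t ∈ Ico t₀ T, HasDerivAt z (f (z t)) t ∧ z t ∈ U)
    (hzT : Tendsto z (𝓝[<] T) (𝓝 p)) :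
    ∃ T' > T, ∃ w : ℝ → E, w t₀ = z t₀ ∧
      ∀ t ∈ Ico t₀ T', HasDerivAt w (f (w t)) t ∧ w t ∈ U := by
  obtain ⟨ε, hε, a, r, L, K, hr, haU, hpl⟩ := hf.exists_isPicardLindelof_of_mem_nhds hU
  obtain ⟨s, ⟨hs, hsT⟩, hzs⟩ : ∃ s ∈ Ioo (max t₀ (T - ε)) T, z s ∈ Metric.closedBall p r :=
    (Filter.Eventually.and (Ioo_mem_nhdsLT (max_lt hT (sub_lt_self T hε)))
      (hzT.eventually (Metric.closedBall_mem_nhds p hr))).exists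
  obtain ⟨hts, hTs⟩ := max_lt_iff.mp hs
  obtain ⟨w, hws, hw⟩ :=
    (hpl s).exists_eq_forall_mem_Icc_hasDerivWithinAt_and_mem_closedBall hzs
  have hwD : ∀ t ∈ Ioo (s - ε) (s + ε), HasDerivAt w (f (w t)) t := fun t ht ↦
    (hw t (Ioo_subset_Icc_self ht)).1.hasDerivAt (Icc_mem_nhds ht.1 ht.2)
  -- Gluing at `s` rather than at `T` makes a uniqueness argument unnecessary.
  refine ⟨s + ε, by linarith, fun t ↦ if t ≤ s then z t else w t, if_pos hts.le,
    fun t ht ↦ ?_⟩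
  rcases lt_trichotomy t s with hlt | rfl | hgt
  · have heq : (fun t ↦ if t ≤ s then z t else w t) =ᶠ[𝓝 t] z :=
      eventually_of_mem (Iic_mem_nhds hlt) fun u hu ↦ if_pos hu
    dsimp only
    rw [if_pos hlt.le]
    obtain ⟨hzD, hzU⟩ := hz t ⟨ht.1, hlt.trans hsT⟩
    exact ⟨hzD.congr_of_eventuallyEq heq, hzU⟩
  · dsimp only
    rw [if_pos le_rfl]
    obtain ⟨hzD, hzU⟩ := hz t ⟨ht.1, hsT⟩
    refine ⟨hzD.ite_le ?_ hws.symm, hzU⟩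
    simpa only [← hws] using hwD t ⟨by linarith, by linarith⟩
  · have heq : (fun t ↦ if t ≤ s then z t else w t) =ᶠ[𝓝 t] w :=
      eventually_of_mem (Ioi_mem_nhds hgt) fun u hu ↦ if_neg (not_le.mpr hu)
    dsimp only
    rw [if_neg (not_le.mpr hgt)]
    exact ⟨(hwD t ⟨by linarith, ht.2⟩).congr_of_eventuallyEq heq,
      haU (hw t ⟨by linarith, ht.2.le⟩).2⟩

noncomputable def B (α β d v₀ : ℝ) (p : ℝ × ℝ) : ℝ × ℝ :=
  (p.2, -α * (V (p.1 / d) - v₀ + p.2) - β * p.2 / p.1 ^ 2)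

theorem abs_V_lt_two (u : ℝ) : |V u| < 2 :=
  calc |V u| ≤ |Real.tanh (u - 2)| + |Real.tanh (-2)| := abs_sub _ _
    _ < 1 + 1 := add_lt_add (abs_tanh_lt_one _) (abs_tanh_lt_one _)
    _ = 2 := by norm_num

@[fun_prop]
theorem Real.contDiff_tanh {n : WithTop ℕ∞} : ContDiff ℝ n Real.tanh := by
  simp only [funext Real.tanh_eq_sinh_div_cosh]
  exact Real.contDiff_sinh.div Real.contDiff_cosh fun x ↦ (Real.cosh_pos x).ne'

theorem contDiffAt_B {α β d v₀ : ℝ} {p : ℝ × ℝ} (hp : p.1 ≠ 0) :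
    ContDiffAt ℝ 1 (B α β d v₀) p := by
  unfold B V
  fun_prop (disch := exact pow_ne_zero 2 hp)

section
variable {α β d v₀ : ℝ}

theorem mul_B_snd_neg (hα : 0 < α) (hβ : 0 ≤ β) {X Y : ℝ} (hY : 2 + |v₀| ≤ |Y|) :
    Y * (B α β d v₀ (X, Y)).2 < 0 := by
  set W := V (X / d) - v₀
  have hW : |W| < |Y| :=
    ((abs_sub _ _).trans_lt (by linarith [abs_V_lt_two (X / d)])).trans_le hY
  have hYW : 0 < Y * W + Y ^ 2 := by
    have := neg_abs_le (Y * W)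
    rw [abs_mul] at this
    nlinarith [abs_nonneg W, sq_abs Y]
  have hdamp : 0 ≤ Y * (β * Y / X ^ 2) := by
    rw [show Y * (β * Y / X ^ 2) = β * Y ^ 2 / X ^ 2 by ring]
    positivity
  calc Y * (B α β d v₀ (X, Y)).2 = -α * (Y * W + Y ^ 2) - Y * (β * Y / X ^ 2) := by
        simp only [B, W]; ring
    _ < 0 := by nlinarith

theorem abs_B_snd_le (hα : 0 ≤ α) (hβ : 0 ≤ β) {m M X Y : ℝ} (hm : 0 < m) (hX : m ≤ X)
    (hY : |Y| ≤ M) :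
    |(B α β d v₀ (X, Y)).2| ≤ α * (2 + |v₀| + M) + β * M / m ^ 2 := by
  have hV := abs_V_lt_two (X / d)
  have hsum : |V (X / d) - v₀ + Y| ≤ |V (X / d)| + |v₀| + |Y| :=
    (abs_add_le _ _).trans (by gcongr; exact abs_sub _ _)
  have hdamp : |β * Y / X ^ 2| = β * |Y| / X ^ 2 := by
    rw [abs_div, abs_mul, abs_of_nonneg hβ, abs_of_nonneg (sq_nonneg X)]
  calc |(B α β d v₀ (X, Y)).2|
      ≤ |-α * (V (X / d) - v₀ + Y)| + |β * Y / X ^ 2| := abs_sub _ _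
    _ ≤ α * (|V (X / d)| + |v₀| + |Y|) + β * |Y| / X ^ 2 := by
        rw [hdamp, abs_mul, abs_neg, abs_of_nonneg hα]
        gcongr
    _ ≤ α * (2 + |v₀| + M) + β * M / m ^ 2 := by
        have := (abs_nonneg Y).trans hY
        gcongr

theorem abs_le_max_of_hasDerivAt_B_snd (hα : 0 < α) (hβ : 0 ≤ β) {x y : ℝ → ℝ} {T : ℝ}
    (hy : ∀ t ∈ Ico 0 T, HasDerivAt y (B α β d v₀ (x t, y t)).2 t) :
    ∀ t ∈ Ico 0 T, |y t| ≤ max |y 0| (2 + |v₀|) := by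
  set M := max |y 0| (2 + |v₀|)
  intro t ht
  have hsq : y t ^ 2 ≤ M ^ 2 := by
    refine image_le_of_deriv_right_lt_deriv_boundary (a := 0) (b := t) (f := fun u ↦ y u ^ 2)
      (f' := fun u ↦ 2 * y u * (B α β d v₀ (x u, y u)).2) (B' := fun _ ↦ 0)
      (fun u hu ↦ ?_) (fun u hu ↦ ?_) ?_ (fun _ ↦ hasDerivAt_const _ _) (fun u hu hyu ↦ ?_)
      ⟨ht.1, le_rfl⟩
    · exact ((hy u ⟨hu.1, hu.2.trans_lt ht.2⟩).continuousAt.pow 2).continuousWithinAt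
    · simpa using ((hy u ⟨hu.1, hu.2.trans ht.2⟩).fun_pow 2).hasDerivWithinAt
    · exact sq_le_sq' (neg_le_of_abs_le (le_max_left _ _)) (le_of_abs_le (le_max_left _ _))
    · have : 2 + |v₀| ≤ |y u| := by
        rw [sq_eq_sq_iff_abs_eq_abs,
          abs_of_nonneg (a := M) ((abs_nonneg _).trans (le_max_left _ _))] at hyu
        exact hyu ▸ le_max_right _ _
      nlinarith [mul_B_snd_neg (d := d) (X := x u) hα hβ this]
  exact abs_le_of_sq_le_sq hsq ((abs_nonneg _).trans (le_max_left _ _))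

end

theorem finite_time_implies_collision_general (α β d v₀ : ℝ)
    (hα : 0 < α) (hβ : 0 < β)
    (x y : ℝ → ℝ) (T : ℝ) (hT : 0 < T)
    (hsol : IsSol α β d v₀ x y (T : EReal))
    (hmax : IsMaximal α β d v₀ x y (T : EReal)) :
    Tendsto x (𝓝[<] T) (𝓝 0) := by
  have hsol' (t : ℝ) (ht : t ∈ Ico 0 T) :
      0 < x t ∧ HasDerivAt x (y t) t ∧ HasDerivAt y (B α β d v₀ (x t, y t)).2 t :=
    hsol t ht.1 (EReal.coe_lt_coe_iff.mpr ht.2)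
  have hnear : ∀ᶠ t in 𝓝[<] T, t ∈ Ico 0 T := Ico_mem_nhdsLT hT
  set M := max |y 0| (2 + |v₀|)
  have hyM := abs_le_max_of_hasDerivAt_B_snd hα hβ.le fun t ht ↦ (hsol' t ht).2.2
  obtain ⟨L, hxL⟩ := exists_tendsto_nhdsLT_of_hasDerivAt_of_norm_le (C := M)
    (hnear.mono fun t ht ↦ ⟨(hsol' t ht).2.1, hyM t ht⟩)
  obtain rfl | hL := (ge_of_tendsto hxL (hnear.mono fun t ht ↦ (hsol' t ht).1.le)).eq_or_lt
  · exact hxL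
  have hxL' : ∀ᶠ t in 𝓝[<] T, L / 2 ≤ x t :=
    hxL.eventually (eventually_ge_nhds (half_lt_self hL))
  obtain ⟨Ly, hyL⟩ := exists_tendsto_nhdsLT_of_hasDerivAt_of_norm_le
    (C := α * (2 + |v₀| + M) + β * M / (L / 2) ^ 2) <| (hnear.and hxL').mono
      fun t ⟨ht, hxt⟩ ↦ ⟨(hsol' t ht).2.2, abs_B_snd_le hα.le hβ.le (half_pos hL) hxt (hyM t ht)⟩
  obtain ⟨T', hT', w, hw0, hw⟩ :=
    (contDiffAt_B (p := (L, Ly)) hL.ne').exists_extension_of_tendsto_nhdsLT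
      ((isOpen_lt continuous_const continuous_fst).mem_nhds hL) hT (z := fun t ↦ (x t, y t))
      (fun t ht ↦ ⟨(hsol' t ht).2.1.prodMk (hsol' t ht).2.2, (hsol' t ht).1⟩)
      (hxL.prodMk_nhds hyL)
  refine (hmax T' (fun t ↦ (w t).1) (fun t ↦ (w t).2) (EReal.coe_lt_coe_iff.mpr hT')
    (fun t ht htT' ↦ ?_) (congrArg Prod.fst hw0) (congrArg Prod.snd hw0)).elim
  obtain ⟨hwD, hwU⟩ := hw t ⟨ht, EReal.coe_lt_coe_iff.mp htT'⟩
  exact ⟨hwU, hasFDerivAt_fst.comp_hasDerivAt (f := w) t hwD,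
    hasFDerivAt_snd.comp_hasDerivAt (f := w) t hwD⟩

/-- a finite maximal time of definition `𝒯 < ∞` forces collision:
`x_t → 0` as `t → 𝒯⁻`. -/
theorem finite_time_implies_collision (α β d v₀ : ℝ)
    (hα : 0 < α) (hβ : 0 < β) (hd : 0 < d)
    (hv₀ : v₀ ∈ Set.Ioo 0 (1 + Real.tanh 2))
    (x y : ℝ → ℝ) (T : ℝ) (hT : 0 < T)
    (x₀ y₀ : ℝ) (hx₀ : 0 < x₀) (hinit : x 0 = x₀ ∧ y 0 = y₀)
    (hsol : IsSol α β d v₀ x y (T : EReal))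
    (hmax : IsMaximal α β d v₀ x y (T : EReal)) :
    Tendsto x (𝓝[<] T) (𝓝 0) :=
  finite_time_implies_collision_general α β d v₀ hα hβ x y T hT hsol hmax
end

section
/- Let t ↦ (x_t, y_t) be the unique solution of the ODE ż = B(z) on its maximal forward interval [0, 𝒯) with (x∘, y∘) ∈ S, suppose 𝒯 < ∞, and let x_- = min{x∘, x_∞} and ť = sup{ t < 𝒯 : x_t ≥ x_- /2 }. Then the set U = (0, x_- /2) × [0, ∞) is forward invariant on (ť, 𝒯): if (x_{t'}, y_{t'}) ∈ U for some t' ∈ (ť, 𝒯), then (x_t, y_t) ∈ U for all t ∈ [t', 𝒯). -/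
open Real Set Filter Topology

/-!
After time `ť` the trajectory stays in `x < x₋ / 2 < x_∞` by the very definition of `ť`, and
below the equilibrium distance `V(x / d) < v∘`. On the boundary `y = 0` the field is then
`ẏ = α (v∘ - V(x / d)) > 0`, so `y` can never cross zero from above.
-/

lemma artanh_eq_real_artanh {w : ℝ} (hw : w ∈ Icc (-1) 1) : _root_.artanh w = Real.artanh w :=
  (Real.artanh_eq_half_log hw).symm

lemma tanh_lt_iff_lt_artanh {z c : ℝ} (hc : c ∈ Ioo (-1) 1) : tanh z < c ↔ z < Real.artanh c := by
  rw [← Real.artanh_lt_artanh_iff ⟨neg_one_lt_tanh z, tanh_lt_one z⟩ hc, Real.artanh_tanh]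

lemma add_tanh_neg_two_mem_Ioo {v₀ : ℝ} (hv₀ : v₀ ∈ Ioo 0 (1 + tanh 2)) :
    v₀ + tanh (-2) ∈ Ioo (-1) 1 := by
  rw [tanh_neg]
  constructor <;> linarith [tanh_lt_one 2, hv₀.1, hv₀.2]

lemma xInf_pos {d v₀ : ℝ} (hd : 0 < d) (hv₀ : v₀ ∈ Ioo 0 (1 + tanh 2)) : 0 < xInf d v₀ := by
  have hc := add_tanh_neg_two_mem_Ioo hv₀
  have h : -2 < Real.artanh (v₀ + tanh (-2)) :=
    (tanh_lt_iff_lt_artanh hc).1 (by linarith [hv₀.1])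
  rw [xInf, artanh_eq_real_artanh (Ioo_subset_Icc_self hc)]
  exact mul_pos hd (by linarith)

lemma V_lt_of_lt_xInf {d v₀ w : ℝ} (hd : 0 < d) (hv₀ : v₀ ∈ Ioo 0 (1 + tanh 2))
    (hw : w < xInf d v₀) : V (w / d) < v₀ := by
  have hc := add_tanh_neg_two_mem_Ioo hv₀
  rw [xInf, artanh_eq_real_artanh (Ioo_subset_Icc_self hc), ← div_lt_iff₀' hd] at hw
  have h := (tanh_lt_iff_lt_artanh hc).2 (show w / d - 2 < _ by linarith)
  rw [V]
  linarith

lemma lt_of_sSup_lt {x : ℝ → ℝ} {T c t : ℝ}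
    (ht : sSup {s : ℝ | 0 ≤ s ∧ s < T ∧ c ≤ x s} < t) (htT : t < T) : x t < c := by
  have h0 : 0 ≤ t := (Real.sSup_nonneg fun _ hs => hs.1).trans ht.le
  by_contra! h
  exact notMem_of_csSup_lt ht ⟨T, fun _ hs => hs.2.1.le⟩ ⟨h0, htT, h⟩

lemma nonneg_of_deriv_pos_of_eq_zero {f f' : ℝ → ℝ} {a b : ℝ}
    (hf : ∀ t ∈ Icc a b, HasDerivAt f (f' t) t) (ha : 0 ≤ f a)
    (hzero : ∀ t ∈ Ico a b, f t = 0 → 0 < f' t) : ∀ t ∈ Icc a b, 0 ≤ f t := by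
  have key := image_le_of_deriv_right_lt_deriv_boundary (f := -f) (f' := -f') (B := 0) (B' := 0)
    (fun t ht => (hf t ht).neg.continuousAt.continuousWithinAt)
    (fun t ht => (hf t (Ico_subset_Icc_self ht)).neg.hasDerivWithinAt)
    (by simpa using ha) (fun _ => hasDerivAt_const _ _)
    (fun t ht h => by simpa using hzero t ht (by simpa using h))
  intro t ht
  simpa using key ht

theorem upper_region_invariant_general (α β d v₀ : ℝ)
    (hα : 0 < α) (hd : 0 < d)
    (hv₀ : v₀ ∈ Set.Ioo 0 (1 + Real.tanh 2))
    (x y : ℝ → ℝ) (T : ℝ)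
    (x₀ : ℝ)
    (hsol : IsSol α β d v₀ x y (T : EReal))
    (xm : ℝ) (hxm : xm = min x₀ (xInf d v₀))
    (tc : ℝ) (htc : tc = sSup {t : ℝ | 0 ≤ t ∧ t < T ∧ xm / 2 ≤ x t}) :
    ∀ t' : ℝ, tc < t' → t' < T →
      (0 < x t' ∧ x t' < xm / 2 ∧ 0 ≤ y t') →
      ∀ t : ℝ, t' ≤ t → t < T → 0 < x t ∧ x t < xm / 2 ∧ 0 ≤ y t := by
  intro t' htc' _ hU t htt' htT
  have htc0 : 0 ≤ tc := htc ▸ Real.sSup_nonneg fun _ hs => hs.1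
  have hsol' : ∀ s ∈ Icc t' t, _ := fun s hs =>
    hsol s (by linarith [hs.1]) (EReal.coe_lt_coe_iff.2 (by linarith [hs.2]))
  have hx_lt : ∀ s ∈ Icc t' t, x s < xm / 2 := fun s hs =>
    lt_of_sSup_lt (htc ▸ htc'.trans_le hs.1) (hs.2.trans_lt htT)
  have hxm_lt : xm / 2 < xInf d v₀ := by
    linarith [xInf_pos hd hv₀, hxm ▸ min_le_right x₀ (xInf d v₀)]
  have ht : t ∈ Icc t' t := ⟨htt', le_rfl⟩
  refine ⟨(hsol' t ht).1, hx_lt t ht, ?_⟩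
  refine nonneg_of_deriv_pos_of_eq_zero (fun s hs => (hsol' s hs).2.2) hU.2.2
    (fun s hs hys => ?_) t ht
  have hV := V_lt_of_lt_xInf hd hv₀ ((hx_lt s (Ico_subset_Icc_self hs)).trans hxm_lt)
  rw [hys, mul_zero, zero_div, sub_zero, add_zero]
  linarith [mul_pos hα (sub_pos.2 hV)]

/-- with `𝒯 < ∞`, `x₋ = min{x∘, x_∞}` and
`ť = sup{ t < 𝒯 : x_t ≥ x₋ / 2 }`, the upper region `U = (0, x₋ / 2) × [0,∞)` is forward
invariant on `(ť, 𝒯)`. -/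
theorem upper_region_invariant (α β d v₀ : ℝ)
    (hα : 0 < α) (hβ : 0 < β) (hd : 0 < d)
    (hv₀ : v₀ ∈ Set.Ioo 0 (1 + Real.tanh 2))
    (x y : ℝ → ℝ) (T : ℝ) (hT : 0 < T)
    (x₀ y₀ : ℝ) (hx₀ : 0 < x₀) (hinit : x 0 = x₀ ∧ y 0 = y₀)
    (hsol : IsSol α β d v₀ x y (T : EReal))
    (hmax : IsMaximal α β d v₀ x y (T : EReal))
    (xm : ℝ) (hxm : xm = min x₀ (xInf d v₀))
    (tc : ℝ) (htc : tc = sSup {t : ℝ | 0 ≤ t ∧ t < T ∧ xm / 2 ≤ x t}) :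
    ∀ t' : ℝ, tc < t' → t' < T →
      (0 < x t' ∧ x t' < xm / 2 ∧ 0 ≤ y t') →
      ∀ t : ℝ, t' ≤ t → t < T → 0 < x t ∧ x t < xm / 2 ∧ 0 ≤ y t :=
  upper_region_invariant_general α β d v₀ hα hd hv₀ x y T x₀ hsol xm hxm tc htc
end

section
/- Let t ↦ (x_t, y_t) be the unique solution of the ODE ż = B(z) on its maximal forward interval [0, 𝒯) with (x∘, y∘) ∈ S, suppose 𝒯 < ∞, and let x_- = min{x∘, x_∞} and ť = sup{ t < 𝒯 : x_t ≥ x_- /2 }. If (x_{t'}, y_{t'}) ∈ U = (0, x_- /2) × [0, ∞) for some t' ∈ (ť, 𝒯), then x_t ≥ x_{t'} for all t ∈ (t', 𝒯). -/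
/-! After `ť` the gap `x` stays below `x₋ / 2 < x_∞`, where `V (x / d) < v∘`. Wherever the
velocity `y` vanishes there, `ẏ = α (v∘ - V (x / d)) > 0`, so `y` cannot cross zero downwards:
once `y ≥ 0` it stays so, and `x` is nondecreasing. -/

open Real Set Filter Topology

lemma artanh_eq_real_artanh_s9 {v : ℝ} (hv : v ∈ Ioo (-1) 1) : _root_.artanh v = Real.artanh v :=
  (Real.artanh_eq_half_log (Ioo_subset_Icc_self hv)).symm

lemma tanh_lt_iff_lt_artanh_s9 {u v : ℝ} (hv : v ∈ Ioo (-1) 1) :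
    Real.tanh u < v ↔ u < _root_.artanh v := by
  rw [artanh_eq_real_artanh_s9 hv,
    ← Real.artanh_lt_artanh_iff ⟨Real.neg_one_lt_tanh u, Real.tanh_lt_one u⟩ hv, Real.artanh_tanh]

lemma V_div_lt_of_lt_xInf {d v₀ ξ : ℝ} (hd : 0 < d) (hv₀ : v₀ ∈ Ioo 0 (1 + Real.tanh 2))
    (hξ : ξ < xInf d v₀) : V (ξ / d) < v₀ := by
  have hmem : v₀ + Real.tanh (-2) ∈ Ioo (-1) 1 := by
    rw [Real.tanh_neg]
    constructor <;> linarith [hv₀.1, hv₀.2, Real.tanh_lt_one 2]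
  have : ξ / d - 2 < _root_.artanh (v₀ + Real.tanh (-2)) := by
    rw [sub_lt_iff_lt_add', div_lt_iff₀ hd, mul_comm]
    exact hξ
  rw [V, sub_lt_iff_lt_add]
  exact (tanh_lt_iff_lt_artanh_s9 hmem).2 this

lemma nonneg_of_hasDerivAt_pos_at_zero {f f' : ℝ → ℝ} {a b : ℝ}
    (hf : ∀ s ∈ Icc a b, HasDerivAt f (f' s) s) (ha : 0 ≤ f a)
    (hcross : ∀ s ∈ Ico a b, f s = 0 → 0 < f' s) : ∀ s ∈ Icc a b, 0 ≤ f s := by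
  have key := image_le_of_deriv_right_lt_deriv_boundary'
    (f := fun s => -f s) (f' := fun s => -f' s) (B := fun _ => 0) (B' := fun _ => 0)
    (fun s hs => (hf s hs).continuousAt.continuousWithinAt.neg)
    (fun s hs => (hf s (Ico_subset_Icc_self hs)).neg.hasDerivWithinAt) (by simpa using ha)
    continuousOn_const (fun _ _ => hasDerivWithinAt_const _ _ _)
    (fun s hs hs0 => by simpa using hcross s hs (neg_eq_zero.1 hs0))
  exact fun s hs => by simpa using key hs

section Solution

variable {α β d v₀ : ℝ} {x y : ℝ → ℝ} {T : ℝ}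

lemma IsSol.velocity_nonneg (hsol : IsSol α β d v₀ x y (T : EReal)) (hα : 0 < α) (hd : 0 < d)
    (hv₀ : v₀ ∈ Ioo 0 (1 + Real.tanh 2)) {a b : ℝ} (ha : 0 ≤ a) (hb : b < T)
    (hx : ∀ s ∈ Icc a b, x s < xInf d v₀) (hya : 0 ≤ y a) : ∀ s ∈ Icc a b, 0 ≤ y s := by
  refine nonneg_of_hasDerivAt_pos_at_zero
    (fun s hs => (hsol s (ha.trans hs.1) (by exact_mod_cast hs.2.trans_lt hb)).2.2) hya ?_
  -- at zero velocity the friction terms vanish and only the pull towards `v₀` remains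
  intro s hs hys
  have hV := V_div_lt_of_lt_xInf hd hv₀ (hx s (Ico_subset_Icc_self hs))
  rw [hys, mul_zero, zero_div, sub_zero, add_zero]
  nlinarith [mul_pos hα (sub_pos.2 hV)]

lemma IsSol.monotoneOn_of_velocity_nonneg (hsol : IsSol α β d v₀ x y (T : EReal)) {a b : ℝ}
    (ha : 0 ≤ a) (hb : b < T) (hy : ∀ s ∈ Icc a b, 0 ≤ y s) : MonotoneOn x (Icc a b) := by
  have hderiv : ∀ s ∈ Icc a b, HasDerivAt x (y s) s := fun s hs =>
    (hsol s (ha.trans hs.1) (by exact_mod_cast hs.2.trans_lt hb)).2.1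
  refine monotoneOn_of_hasDerivWithinAt_nonneg (convex_Icc a b)
    (fun s hs => (hderiv s hs).continuousAt.continuousWithinAt)
    (fun s hs => (hderiv s (interior_subset hs)).hasDerivWithinAt)
    (fun s hs => hy s (interior_subset hs))

end Solution

theorem upper_region_drift_right_general (α β d v₀ : ℝ)
    (hα : 0 < α) (hd : 0 < d)
    (hv₀ : v₀ ∈ Set.Ioo 0 (1 + Real.tanh 2))
    (x y : ℝ → ℝ) (T : ℝ)
    (x₀ : ℝ)
    (hsol : IsSol α β d v₀ x y (T : EReal))
    (xm : ℝ) (hxm : xm = min x₀ (xInf d v₀))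
    (tc : ℝ) (htc : tc = sSup {t : ℝ | 0 ≤ t ∧ t < T ∧ xm / 2 ≤ x t}) :
    ∀ t' : ℝ, tc < t' → t' < T →
      (0 < x t' ∧ x t' < xm / 2 ∧ 0 ≤ y t') →
      ∀ t : ℝ, t' < t → t < T → x t' ≤ x t := by
  subst htc
  rintro t' htc' - ⟨-, -, hyt'⟩ t htt' htT
  -- also when the set is empty, since `sSup ∅ = 0`
  have ht' : 0 ≤ t' := (Real.sSup_nonneg fun _ hs => hs.1).trans htc'.le
  have hbelow : ∀ s ∈ Icc t' t, x s < xInf d v₀ := by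
    intro s hs
    have hsT : s < T := hs.2.trans_lt htT
    have hxs : x s < xm / 2 := by
      by_contra! h
      exact notMem_of_csSup_lt (htc'.trans_le hs.1) ⟨T, fun r hr => hr.2.1.le⟩
        ⟨ht'.trans hs.1, hsT, h⟩
    have hpos := (hsol s (ht'.trans hs.1) (by exact_mod_cast hsT)).1
    have : xm ≤ xInf d v₀ := hxm ▸ min_le_right _ _
    linarith
  have hy := hsol.velocity_nonneg hα hd hv₀ ht' htT hbelow hyt'
  exact hsol.monotoneOn_of_velocity_nonneg ht' htT hy ⟨le_rfl, htt'.le⟩ ⟨htt'.le, le_rfl⟩ htt'.le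

/-- with `𝒯 < ∞`, `x₋ = min{x∘, x_∞}` and
`ť = sup{ t < 𝒯 : x_t ≥ x₋ / 2 }`, if the solution is in `U = (0, x₋ / 2) × [0,∞)` at some
time `t' ∈ (ť, 𝒯)`, then `x_t ≥ x_{t'}` for all `t ∈ (t', 𝒯)`. -/
theorem upper_region_drift_right (α β d v₀ : ℝ)
    (hα : 0 < α) (hβ : 0 < β) (hd : 0 < d)
    (hv₀ : v₀ ∈ Set.Ioo 0 (1 + Real.tanh 2))
    (x y : ℝ → ℝ) (T : ℝ) (hT : 0 < T)
    (x₀ y₀ : ℝ) (hx₀ : 0 < x₀) (hinit : x 0 = x₀ ∧ y 0 = y₀)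
    (hsol : IsSol α β d v₀ x y (T : EReal))
    (hmax : IsMaximal α β d v₀ x y (T : EReal))
    (xm : ℝ) (hxm : xm = min x₀ (xInf d v₀))
    (tc : ℝ) (htc : tc = sSup {t : ℝ | 0 ≤ t ∧ t < T ∧ xm / 2 ≤ x t}) :
    ∀ t' : ℝ, tc < t' → t' < T →
      (0 < x t' ∧ x t' < xm / 2 ∧ 0 ≤ y t') →
      ∀ t : ℝ, t' < t → t < T → x t' ≤ x t :=
  upper_region_drift_right_general α β d v₀ hα hd hv₀ x y T x₀ hsol xm hxm tc htc
end

section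
/- Let φ† be the solution of the ODE φ†'(y) = -φ†(y)²/(α·φ†(y)² + β) with initial condition φ†(-ȳ) = x†, where ȳ > 0 and x† > 0. Then φ† is defined on all of ℝ, is nonincreasing, and satisfies φ†(y) ≥ ( 1/x† + (y + ȳ)/β )^{-1} > 0 for all y ≥ -ȳ; in particular inf_{|y| ≤ ȳ} φ†(y) ≥ ( 1/x† + 2ȳ/β )^{-1}. -/
open Real Set

/-!
The right-hand side is `-φ²/(αφ² + β) ≤ 0`, so `φ` is antitone. It vanishes at `φ = 0`, so a
solution starting positive stays positive; concretely `φ' = -k φ` with the continuous coefficient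
`k = φ/(αφ² + β)`, and the integrating factor `exp (∫ k)` makes `φ · exp (∫ k)` constant. Once
`φ > 0`, the reciprocal satisfies `(1/φ)' = 1/(αφ² + β) ≤ 1/β`, so `1/φ` grows at most linearly with
slope `1/β`, which is the lower barrier.
-/

theorem eq_mul_exp_neg_integral_of_hasDerivAt {k φ : ℝ → ℝ} (hk : Continuous k)
    (hφ : ∀ y, HasDerivAt φ (-(k y * φ y)) y) (a y : ℝ) :
    φ y = φ a * exp (-∫ t in a..y, k t) := by
  set K : ℝ → ℝ := fun y => ∫ t in a..y, k t
  have hK : ∀ y, HasDerivAt K (k y) y := fun y => (hk.integral_hasStrictDerivAt a y).hasDerivAt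
  have hconst : ∀ y, HasDerivAt (fun y => φ y * exp (K y)) 0 y := fun y =>
    ((hφ y).mul (hK y).exp).congr_deriv (by ring)
  have hFy : φ y * exp (K y) = φ a * exp (K a) :=
    is_const_of_deriv_eq_zero (fun y => (hconst y).differentiableAt)
      (fun y => (hconst y).deriv) y a
  simp only [K, intervalIntegral.integral_same, exp_zero, mul_one] at hFy
  rw [exp_neg, ← hFy, mul_inv_cancel_right₀ (exp_pos _).ne']

theorem pos_of_hasDerivAt_eq_neg_mul {k φ : ℝ → ℝ} (hk : Continuous k)
    (hφ : ∀ y, HasDerivAt φ (-(k y * φ y)) y) {a : ℝ} (ha : 0 < φ a) (y : ℝ) : 0 < φ y := by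
  rw [eq_mul_exp_neg_integral_of_hasDerivAt hk hφ a y]
  positivity

section Barrier

variable {α β : ℝ} {φ : ℝ → ℝ}

theorem antitone_of_hasDerivAt_neg_sq_div (hα : 0 ≤ α) (hβ : 0 ≤ β)
    (hode : ∀ y, HasDerivAt φ (-(φ y) ^ 2 / (α * (φ y) ^ 2 + β)) y) : Antitone φ :=
  antitone_of_hasDerivAt_nonpos hode fun y => by
    simp only [Pi.zero_apply]
    exact div_nonpos_of_nonpos_of_nonneg (neg_nonpos.2 (sq_nonneg _)) (by positivity)

theorem pos_of_hasDerivAt_neg_sq_div (hα : 0 ≤ α) (hβ : 0 < β)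
    (hode : ∀ y, HasDerivAt φ (-(φ y) ^ 2 / (α * (φ y) ^ 2 + β)) y) {a : ℝ} (ha : 0 < φ a)
    (y : ℝ) : 0 < φ y := by
  have hφ : Continuous φ := continuous_iff_continuousAt.2 fun y => (hode y).continuousAt
  refine pos_of_hasDerivAt_eq_neg_mul (k := fun y => φ y / (α * (φ y) ^ 2 + β))
    (hφ.div (by fun_prop) fun y => by positivity) (fun y => ?_) ha y
  convert hode y using 1
  ring

theorem inv_le_inv_add_div_of_hasDerivAt_neg_sq_div (hα : 0 ≤ α) (hβ : 0 < β)
    (hode : ∀ y, HasDerivAt φ (-(φ y) ^ 2 / (α * (φ y) ^ 2 + β)) y) (hpos : ∀ y, 0 < φ y)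
    {a y : ℝ} (hay : a ≤ y) : (φ y)⁻¹ ≤ (φ a)⁻¹ + (y - a) / β := by
  have hinv : ∀ y, HasDerivAt (fun y => (φ y)⁻¹) (α * (φ y) ^ 2 + β)⁻¹ y := fun y =>
    ((hode y).inv (hpos y).ne').congr_deriv (by field_simp [(hpos y).ne'])
  have hslope : ∀ y, deriv (fun y => (φ y)⁻¹) y ≤ β⁻¹ := fun y => by
    rw [(hinv y).deriv]
    exact inv_anti₀ hβ (le_add_of_nonneg_left (by positivity))
  have hgrowth := image_sub_le_mul_sub_of_deriv_le (fun y => (hinv y).differentiableAt) hslope hay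
  rw [div_eq_inv_mul]
  linarith

end Barrier

theorem barrier_properties_general (α β ybar xdag : ℝ)
    (hα : 0 < α) (hβ : 0 < β) (hxdag : 0 < xdag)
    (φ : ℝ → ℝ)
    (hode : ∀ y : ℝ, HasDerivAt φ (-(φ y) ^ 2 / (α * (φ y) ^ 2 + β)) y)
    (hinit : φ (-ybar) = xdag) :
    Antitone φ ∧
    (∀ y : ℝ, -ybar ≤ y →
      0 < (1 / xdag + (y + ybar) / β)⁻¹ ∧ (1 / xdag + (y + ybar) / β)⁻¹ ≤ φ y) ∧
    (∀ y : ℝ, |y| ≤ ybar → (1 / xdag + 2 * ybar / β)⁻¹ ≤ φ y) := by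
  have hanti := antitone_of_hasDerivAt_neg_sq_div hα.le hβ.le hode
  have hpos := pos_of_hasDerivAt_neg_sq_div hα.le hβ hode (hinit ▸ hxdag)
  have hbound : ∀ y : ℝ, -ybar ≤ y →
      0 < (1 / xdag + (y + ybar) / β)⁻¹ ∧ (1 / xdag + (y + ybar) / β)⁻¹ ≤ φ y := by
    intro y hy
    have hrecip := inv_le_inv_add_div_of_hasDerivAt_neg_sq_div hα.le hβ hode hpos hy
    rw [hinit, sub_neg_eq_add, ← one_div xdag] at hrecip
    exact ⟨inv_pos.2 ((inv_pos.2 (hpos y)).trans_le hrecip), inv_le_of_inv_le₀ (hpos y) hrecip⟩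
  refine ⟨hanti, hbound, fun y hy => ?_⟩
  obtain ⟨hlo, hhi⟩ := abs_le.1 hy
  calc (1 / xdag + 2 * ybar / β)⁻¹ = (1 / xdag + (ybar + ybar) / β)⁻¹ := by rw [two_mul]
    _ ≤ φ ybar := (hbound ybar (by linarith)).2
    _ ≤ φ y := hanti hhi

/-- the reference manifold `φ†`, solving
`φ†'(y) = -φ†(y)²/(α φ†(y)² + β)` with `φ†(-ȳ) = x†`, is nonincreasing on `ℝ` and
satisfies `φ†(y) ≥ (1/x† + (y+ȳ)/β)⁻¹ > 0` for `y ≥ -ȳ`; in particular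
`inf_{|y| ≤ ȳ} φ†(y) ≥ (1/x† + 2ȳ/β)⁻¹`. -/
theorem barrier_properties (α β ybar xdag : ℝ)
    (hα : 0 < α) (hβ : 0 < β) (hybar : 0 < ybar) (hxdag : 0 < xdag)
    (φ : ℝ → ℝ)
    (hode : ∀ y : ℝ, HasDerivAt φ (-(φ y) ^ 2 / (α * (φ y) ^ 2 + β)) y)
    (hinit : φ (-ybar) = xdag) :
    Antitone φ ∧
    (∀ y : ℝ, -ybar ≤ y →
      0 < (1 / xdag + (y + ybar) / β)⁻¹ ∧ (1 / xdag + (y + ybar) / β)⁻¹ ≤ φ y) ∧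
    (∀ y : ℝ, |y| ≤ ybar → (1 / xdag + 2 * ybar / β)⁻¹ ≤ φ y) :=
  barrier_properties_general α β ybar xdag hα hβ hxdag φ hode hinit
end

section
/- Let φ(y) = ϱ(y/ϖ†)·(φ†(y) - φ†(ϖ†)) + φ†(ϖ†). Then: (i) φ is nonincreasing on [-ȳ, ȳ] and inf_{|y| ≤ ȳ} φ(y) ≥ φ̲ where φ̲ = ( 1/x† + 2ȳ/β )^{-1}; (ii) φ'(y) = -1/(α + β/φ(y)²) for y ∈ [-ȳ, 0] and φ'(y) = 0 for y ∈ [ϖ†, ȳ]; (iii) there is a constant K > 0 with |φ'(y)| ≤ K and |φ''(y)| ≤ K for all y ∈ [-ȳ, ȳ]. -/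
open Real Set

/-- properties of the flattened reference manifold
`φ(y) = ϱ(y/ϖ†)(φ†(y) - φ†(ϖ†)) + φ†(ϖ†)`:
(i) `φ` is nonincreasing on `[-ȳ, ȳ]` and bounded below there by `φ̲ = (1/x† + 2ȳ/β)⁻¹`;
(ii) `φ'(y) = -1/(α + β/φ(y)²)` on `[-ȳ, 0]` and `φ'(y) = 0` on `[ϖ†, ȳ]`;
(iii) `|φ'|` and `|φ''|` are bounded on `[-ȳ, ȳ]` by some constant `K > 0`. -/
theorem flattened_barrier_properties (α β ybar xdag ϖ : ℝ)
    (hα : 0 < α) (hβ : 0 < β) (hybar : 0 < ybar) (hxdag : 0 < xdag)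
    (hϖ : 0 < ϖ ∧ ϖ < ybar)
    (φd : ℝ → ℝ)
    (hode : ∀ y : ℝ, HasDerivAt φd (-(φd y) ^ 2 / (α * (φd y) ^ 2 + β)) y)
    (hinitd : φd (-ybar) = xdag)
    (hanti : Antitone φd)
    (hlb : ∀ y : ℝ, -ybar ≤ y → (1 / xdag + (y + ybar) / β)⁻¹ ≤ φd y)
    (ϱ : ℝ → ℝ) (hϱsmooth : ContDiff ℝ (⊤ : ℕ∞) ϱ) (hϱanti : Antitone ϱ)
    (hϱrange : ∀ y : ℝ, ϱ y ∈ Set.Icc (0 : ℝ) 1)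
    (hϱone : ∀ y : ℝ, y ≤ 0 → ϱ y = 1)
    (hϱzero : ∀ y : ℝ, 1 ≤ y → ϱ y = 0)
    (φ : ℝ → ℝ)
    (hφ : ∀ y : ℝ, φ y = ϱ (y / ϖ) * (φd y - φd ϖ) + φd ϖ) :
    (AntitoneOn φ (Set.Icc (-ybar) ybar) ∧
      ∀ y : ℝ, |y| ≤ ybar → (1 / xdag + 2 * ybar / β)⁻¹ ≤ φ y) ∧
    ((∀ y : ℝ, -ybar ≤ y → y ≤ 0 → deriv φ y = -1 / (α + β / (φ y) ^ 2)) ∧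
      (∀ y : ℝ, ϖ ≤ y → y ≤ ybar → deriv φ y = 0)) ∧
    (∃ K : ℝ, 0 < K ∧ ∀ y : ℝ, |y| ≤ ybar →
      |deriv φ y| ≤ K ∧ |deriv (deriv φ) y| ≤ K) := by
  obtain ⟨hϖ0, hϖy⟩ := hϖ
  have hφfun : φ = fun y => ϱ (y / ϖ) * (φd y - φd ϖ) + φd ϖ := funext hφ
  subst hφfun
  set F : ℝ → ℝ := fun x => -x ^ 2 / (α * x ^ 2 + β) with hF
  -- denominator nonzero
  have hden : ∀ x : ℝ, α * x ^ 2 + β ≠ 0 := fun x =>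
    ne_of_gt (by positivity)
  -- F smooth
  have hFsmooth : ∀ n : ℕ, ContDiff ℝ n F := by
    intro n
    exact ContDiff.div (contDiff_id.pow 2).neg
      ((contDiff_const.mul (contDiff_id.pow 2)).add contDiff_const) hden
  -- φd differentiable and its deriv
  have hder : deriv φd = fun y => F (φd y) := funext fun y => (hode y).deriv
  have hφddiff : Differentiable ℝ φd := fun y => (hode y).differentiableAt
  -- φd is C^n for every n
  have hφdn : ∀ n : ℕ, ContDiff ℝ n φd := by
    intro n
    induction n with
    | zero => exact contDiff_zero.2 hφddiff.continuous
    | succ n ih =>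
      have : ContDiff ℝ ((n : WithTop ℕ∞) + 1) φd := by
        rw [contDiff_succ_iff_deriv]
        refine ⟨hφddiff, by simp, ?_⟩
        rw [hder]
        exact (hFsmooth n).comp ih
      exact_mod_cast this
  -- φ is C^n for every n
  have hφn : ∀ n : ℕ, ContDiff ℝ n (fun y => ϱ (y / ϖ) * (φd y - φd ϖ) + φd ϖ) := by
    intro n
    exact (((hϱsmooth.of_le (by exact_mod_cast le_top)).comp (contDiff_id.div_const ϖ)).mul
      ((hφdn n).sub contDiff_const)).add contDiff_const
  -- deriv of ϱ vanishes at ≤ 0 and ≥ 1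
  have hϱd0 : ∀ t : ℝ, t ≤ 0 → deriv ϱ t = 0 := by
    intro t ht
    have : IsLocalMax ϱ t := Filter.Eventually.of_forall fun y => by
      rw [hϱone t ht]; exact (hϱrange y).2
    exact this.deriv_eq_zero
  have hϱd1 : ∀ t : ℝ, 1 ≤ t → deriv ϱ t = 0 := by
    intro t ht
    have : IsLocalMin ϱ t := Filter.Eventually.of_forall fun y => by
      rw [hϱzero t ht]; exact (hϱrange y).1
    exact this.deriv_eq_zero
  -- derivative of the blend
  have hderφ : ∀ y : ℝ, HasDerivAt (fun y => ϱ (y / ϖ) * (φd y - φd ϖ) + φd ϖ)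
      (deriv ϱ (y / ϖ) * (1 / ϖ) * (φd y - φd ϖ) + ϱ (y / ϖ) * F (φd y)) y := by
    intro y
    have h1 : HasDerivAt (fun y : ℝ => y / ϖ) (1 / ϖ) y := by
      simpa using (hasDerivAt_id y).div_const ϖ
    have hϱdiff : Differentiable ℝ ϱ := hϱsmooth.differentiable (by simp)
    have h2 : HasDerivAt (fun y : ℝ => ϱ (y / ϖ)) (deriv ϱ (y / ϖ) * (1 / ϖ)) y :=
      (hϱdiff (y / ϖ)).hasDerivAt.comp y h1
    have h3 : HasDerivAt (fun y : ℝ => φd y - φd ϖ) (F (φd y)) y := (hode y).sub_const _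
    exact (h2.mul h3).add_const _
  -- positivity of φd on [-ybar, ∞)
  have hφdpos : ∀ y : ℝ, -ybar ≤ y → 0 < φd y := by
    intro y hy
    refine lt_of_lt_of_le ?_ (hlb y hy)
    have h1 : (0:ℝ) < 1 / xdag := by positivity
    have h2 : (0:ℝ) ≤ (y + ybar) / β := by
      apply div_nonneg _ hβ.le; linarith
    positivity
  -- lower bound: φ y ≥ φd ϖ  for all y
  have hlow : ∀ y : ℝ, φd ϖ ≤ ϱ (y / ϖ) * (φd y - φd ϖ) + φd ϖ := by
    intro y
    rcases le_or_gt y ϖ with h | h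
    · have h1 : 0 ≤ ϱ (y / ϖ) := (hϱrange _).1
      have h2 : 0 ≤ φd y - φd ϖ := sub_nonneg.2 (hanti h)
      nlinarith
    · have : (1:ℝ) ≤ y / ϖ := (one_le_div hϖ0).2 h.le
      rw [hϱzero _ this]; simp
  refine ⟨⟨?_, ?_⟩, ⟨?_, ?_⟩, ?_⟩
  · -- antitone
    intro a _ b _ hab
    rcases le_or_gt ϖ b with h | h
    · have : (1:ℝ) ≤ b / ϖ := (one_le_div hϖ0).2 h
      calc ϱ (b / ϖ) * (φd b - φd ϖ) + φd ϖ = φd ϖ := by rw [hϱzero _ this]; simp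
        _ ≤ _ := hlow a
    · have hb : 0 ≤ ϱ (b / ϖ) := (hϱrange _).1
      have hba : ϱ (b / ϖ) ≤ ϱ (a / ϖ) := hϱanti (by
        apply div_le_div_of_nonneg_right hab hϖ0.le |>.trans_eq rfl)
      have hφab : φd b ≤ φd a := hanti hab
      have haϖ : 0 ≤ φd a - φd ϖ := sub_nonneg.2 (hanti (hab.trans h.le))
      have hbϖ : 0 ≤ φd b - φd ϖ := sub_nonneg.2 (hanti h.le)
      simp only [add_le_add_iff_right]
      nlinarith
  · -- lower bound
    intro y _
    refine le_trans ?_ (hlow y)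
    refine le_trans ?_ (hlb ϖ (by linarith))
    apply inv_anti₀
    · have h1 : (0:ℝ) < 1 / xdag := by positivity
      have h2 : (0:ℝ) ≤ (ϖ + ybar) / β := by
        apply div_nonneg _ hβ.le; linarith
      positivity
    · have : (ϖ + ybar) / β ≤ 2 * ybar / β := by
        apply div_le_div_of_nonneg_right _ hβ.le |>.trans_eq rfl
        linarith
      linarith
  · -- deriv on [-ybar, 0]
    intro y hy1 hy2
    have ht : y / ϖ ≤ 0 := div_nonpos_of_nonpos_of_nonneg hy2 hϖ0.le
    have hd := (hderφ y).deriv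
    have hx : 0 < φd y := hφdpos y hy1
    have hφy : (fun y => ϱ (y / ϖ) * (φd y - φd ϖ) + φd ϖ) y = φd y := by
      simp only; rw [hϱone _ ht]; ring
    rw [hd, hϱd0 _ ht, hϱone _ ht, hφy]
    simp only [hF]
    have hx2 : (φd y) ^ 2 ≠ 0 := pow_ne_zero 2 hx.ne'
    have hd2 : α + β / (φd y) ^ 2 ≠ 0 := by positivity
    field_simp
    ring
  · -- deriv on [ϖ, ybar]
    intro y hy1 hy2
    have ht : (1:ℝ) ≤ y / ϖ := (one_le_div hϖ0).2 hy1
    have hd := (hderφ y).deriv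
    rw [hd, hϱd1 _ ht, hϱzero _ ht]
    ring
  · -- bounds on derivatives
    set g := fun y => ϱ (y / ϖ) * (φd y - φd ϖ) + φd ϖ with hg
    have h2 : ContDiff ℝ ((1 : WithTop ℕ∞) + 1) g := by exact_mod_cast hφn 2
    have hc1 : ContDiff ℝ (1 : WithTop ℕ∞) (deriv g) := (contDiff_succ_iff_deriv.mp h2).2.2
    have hcont1 : Continuous (deriv g) := hc1.continuous
    have hcont2 : Continuous (deriv (deriv g)) := (contDiff_one_iff_deriv.mp hc1).2
    obtain ⟨C1, hC1⟩ := (isCompact_Icc (a := -ybar) (b := ybar)).exists_bound_of_continuousOn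
      hcont1.continuousOn
    obtain ⟨C2, hC2⟩ := (isCompact_Icc (a := -ybar) (b := ybar)).exists_bound_of_continuousOn
      hcont2.continuousOn
    have h0mem : (0:ℝ) ∈ Icc (-ybar) ybar := by constructor <;> linarith
    have hC1nn : 0 ≤ C1 := le_trans (norm_nonneg _) (hC1 0 h0mem)
    have hC2nn : 0 ≤ C2 := le_trans (norm_nonneg _) (hC2 0 h0mem)
    refine ⟨C1 + C2 + 1, by linarith, fun y hy => ?_⟩
    have hymem : y ∈ Icc (-ybar) ybar := ⟨(abs_le.mp hy).1, (abs_le.mp hy).2⟩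
    have b1 := hC1 y hymem
    have b2 := hC2 y hymem
    rw [Real.norm_eq_abs] at b1 b2
    exact ⟨by linarith, by linarith⟩
end
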